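/- arXiv:2111.13282 — 4 statements merged into one kernel-verified Lean document; each statement's English description precedes it below -/
import Mathlib

section
/- With the optimal discriminator D*(x) = p_data(x)/(p_data(x)+p_g(x)) substituted, the GAN value function equals 2·JSD(p_data ‖ p_g) − log 4, where JSD is the Jensen–Shannon divergence. In pointwise/measure-theoretic form: for probability densities p and q (with respect to a common measure μ), ∫ p log(p/(p+q)) dμ + ∫ q log(q/(p+q)) dμ = 2·JSD(p‖q) − log 4, where JSD(p‖q) := (1/2)KL(p ‖ (p+q)/2) + (1/2)KL(q ‖ (p+q)/2) and KL(p‖r) := ∫ p log(p/r) dμ. -/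
open Real MeasureTheory

/-- With the optimal discriminator substituted, the GAN value equals
`2 · JSD(p‖q) − log 4`:
`∫ p log(p/(p+q)) + ∫ q log(q/(p+q)) = 2·JSD(p‖q) − log 4`, where
`JSD(p‖q) = (1/2)·KL(p‖(p+q)/2) + (1/2)·KL(q‖(p+q)/2)` and
`KL(p‖r) = ∫ p log(p/r)`. -/
theorem gan_value_eq_two_jsd_sub_log_four
    {X : Type*} [MeasurableSpace X] (μ : Measure X) (p q : X → ℝ)
    (hp0 : ∀ x, 0 ≤ p x) (hq0 : ∀ x, 0 ≤ q x)
    (hpos : ∀ x, 0 < p x + q x)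
    (hpInt : Integrable p μ) (hqInt : Integrable q μ)
    (hp1 : ∫ x, p x ∂μ = 1) (hq1 : ∫ x, q x ∂μ = 1)
    (hip : Integrable (fun x => p x * Real.log (p x / (p x + q x))) μ)
    (hiq : Integrable (fun x => q x * Real.log (q x / (p x + q x))) μ) :
    (∫ x, p x * Real.log (p x / (p x + q x)) ∂μ)
      + (∫ x, q x * Real.log (q x / (p x + q x)) ∂μ)
    = 2 * ((1 / 2) * (∫ x, p x * Real.log (p x / ((p x + q x) / 2)) ∂μ)
            + (1 / 2) * (∫ x, q x * Real.log (q x / ((p x + q x) / 2)) ∂μ))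
      - Real.log 4 := by
  have key : ∀ (f g : X → ℝ), (∀ x, 0 ≤ f x) → (∀ x, 0 < f x + g x) →
      (fun x => f x * Real.log (f x / ((f x + g x) / 2)))
      = fun x => f x * Real.log (f x / (f x + g x)) + f x * Real.log 2 := by
    intro f g hf hfg
    funext x
    rcases eq_or_lt_of_le (hf x) with h | h
    · simp [← h]
    · have hs := (hfg x).ne'
      rw [div_div_eq_mul_div, Real.log_div (by positivity) hs,
        Real.log_mul h.ne' (by norm_num), Real.log_div h.ne' hs]
      ring
  have key2 : (fun x => q x * Real.log (q x / ((p x + q x) / 2)))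
      = fun x => q x * Real.log (q x / (p x + q x)) + q x * Real.log 2 := by
    funext x
    have := congrFun (key q p hq0 (fun x => by linarith [hpos x])) x
    simpa [add_comm (q x) (p x)] using this
  rw [key p q hp0 hpos, key2]
  have h4 : Real.log 4 = 2 * Real.log 2 := by
    rw [show (4:ℝ) = 2^2 by norm_num, Real.log_pow]; push_cast; ring
  rw [integral_add hip (hpInt.mul_const _),
    integral_add hiq (hqInt.mul_const _),
    integral_mul_const, integral_mul_const, hp1, hq1, h4]
  ring
end

section
/- With one-sided label smoothing, where the discriminator targets label α for real data and label 0 for generated data, the optimal discriminator is D*(x) = α·p_data(x)/(p_data(x)+p_g(x)); pointwise: for a, b > 0 and α ∈ (0,1], the function t ↦ a·[α log t + (1−α) log(1−t)] + b·log(1−t) on (0,1) is maximized at t = αa/(a+b). -/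
open Real Set


lemma aux_log_max (A B t s : ℝ) (hA : 0 < A) (hB : 0 < B)
    (ht : t ∈ Ioo (0:ℝ) 1) (hs : s ∈ Ioo (0:ℝ) 1)
    (hsval : s = A / (A + B)) :
    A * Real.log t + B * Real.log (1 - t) ≤
      A * Real.log s + B * Real.log (1 - s) := by
  obtain ⟨ht0, ht1⟩ := ht
  obtain ⟨hs0, hs1⟩ := hs
  have hAB : 0 < A + B := by linarith
  have h1s : 0 < 1 - s := by linarith
  have h1t : 0 < 1 - t := by linarith
  have key1 : Real.log t - Real.log s ≤ t / s - 1 := by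
    have := Real.log_le_sub_one_of_pos (show 0 < t / s by positivity)
    rwa [Real.log_div (ne_of_gt ht0) (ne_of_gt hs0)] at this
  have key2 : Real.log (1 - t) - Real.log (1 - s) ≤ (1 - t) / (1 - s) - 1 := by
    have := Real.log_le_sub_one_of_pos (show 0 < (1 - t) / (1 - s) by positivity)
    rwa [Real.log_div (ne_of_gt h1t) (ne_of_gt h1s)] at this
  set C := A + B with hC
  have hsA : s * C = A := by rw [hsval, hC]; field_simp
  have h1sB : (1 - s) * C = B := by rw [hsval, hC]; field_simp; ring
  have hzero : A * (t / s - 1) + B * ((1 - t) / (1 - s) - 1) = 0 := by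
    rw [← hsA, ← h1sB]
    field_simp
    ring
  nlinarith [mul_le_mul_of_nonneg_left key1 hA.le,
    mul_le_mul_of_nonneg_left key2 hB.le]

/-- One-sided label smoothing: for `a, b > 0` and `α ∈ (0,1]`, the smoothed
pointwise discriminator objective
`t ↦ a·(α log t + (1−α) log(1−t)) + b·log(1−t)` on `(0,1)` is maximized at
`t = α·a/(a+b)`. -/
theorem gan_one_sided_label_smoothing_optimal_discriminator
    (a b α : ℝ) (ha : 0 < a) (hb : 0 < b) (hα : α ∈ Ioc (0 : ℝ) 1) :
    α * a / (a + b) ∈ Ioo (0 : ℝ) 1 ∧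
    ∀ t ∈ Ioo (0 : ℝ) 1,
      a * (α * Real.log t + (1 - α) * Real.log (1 - t)) + b * Real.log (1 - t) ≤
        a * (α * Real.log (α * a / (a + b)) + (1 - α) * Real.log (1 - α * a / (a + b)))
          + b * Real.log (1 - α * a / (a + b)) := by
  obtain ⟨hα0, hα1⟩ := hα
  have hab : 0 < a + b := by linarith
  have hs0 : 0 < α * a / (a + b) := by positivity
  have hs1 : α * a / (a + b) < 1 := by
    rw [div_lt_one hab]
    nlinarith
  refine ⟨⟨hs0, hs1⟩, ?_⟩
  intro t ht
  have hA : 0 < α * a := by positivity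
  have hB : 0 < a * (1 - α) + b := by nlinarith
  have key := aux_log_max (α * a) (a * (1 - α) + b) t (α * a / (a + b)) hA hB ht
    ⟨hs0, hs1⟩ (by rw [show α * a + (a * (1 - α) + b) = a + b from by ring])
  nlinarith [key]
end

section
/- In LSGAN, if the labels satisfy b − c = 1 and b − a = 2, then twice the generator loss at the optimal discriminator equals the Pearson χ² divergence between p_data + p_g and 2p_g. Precisely: for densities p, q with p + q > 0, ∫ (p+q)·((b−c)p + (a−c)q)²/(p+q)² dμ = ∫ (2q − (p+q))²/(p+q) dμ = χ²(p+q ‖ 2q) when b−c = 1 and b−a = 2. -/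
open MeasureTheory

/-- LSGAN generator loss at the optimal discriminator equals the Pearson χ²
divergence `χ²(p+q ‖ 2q)` when the labels satisfy `b − c = 1` and `b − a = 2`:
`∫ (p+q)·((b−c)p + (a−c)q)²/(p+q)² dμ = ∫ (2q − (p+q))²/(p+q) dμ`. -/
theorem lsgan_pearson_chi_squared
    {X : Type*} [MeasurableSpace X] (μ : Measure X) (p q : X → ℝ) (a b c : ℝ)
    (hp0 : ∀ x, 0 ≤ p x) (hq0 : ∀ x, 0 ≤ q x)
    (hpos : ∀ x, 0 < p x + q x)
    (hbc : b - c = 1) (hba : b - a = 2) :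
    ∫ x, (p x + q x) * ((b - c) * p x + (a - c) * q x) ^ 2 / (p x + q x) ^ 2 ∂μ
      = ∫ x, (2 * q x - (p x + q x)) ^ 2 / (p x + q x) ∂μ := by
  have hac : a - c = -1 := by linarith
  refine integral_congr_ae (Filter.Eventually.of_forall fun x => ?_)
  have h := (hpos x).ne'
  rw [hbc, hac]
  field_simp
  ring
end

section
/- In D2GAN, at the optimal discriminators D₁*(x) = α·p_data(x)/p_g(x) and D₂*(x) = β·p_g(x)/p_data(x), the value function equals α(log α − 1) + β(log β − 1) + α·KL(p_data‖p_g) + β·KL(p_g‖p_data). Pointwise version: for p, q > 0 and α, β > 0, the function (t₁,t₂) ↦ α p log t₁ − q t₁ − p t₂ + β q log t₂ over t₁,t₂ > 0 is maximized at t₁ = αp/q, t₂ = βq/p, with maximum value α p log(αp/q) − αp − βq + βq log(βq/p). -/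
open Real

lemma aux_max (a c t : ℝ) (ha : 0 < a) (hc : 0 < c) (ht : 0 < t) :
    a * Real.log t - c * t ≤ a * Real.log (a / c) - a := by
  have hac : 0 < a / c := div_pos ha hc
  have h := Real.log_le_sub_one_of_pos (show 0 < t / (a / c) by positivity)
  rw [Real.log_div ht.ne' hac.ne'] at h
  have h2 : a * (Real.log t - Real.log (a / c)) ≤ a * (t / (a / c) - 1) :=
    mul_le_mul_of_nonneg_left h ha.le
  have h3 : a * (t / (a / c)) = c * t := by
    field_simp
  nlinarith [h2, h3]

/-- D2GAN optimal discriminators (pointwise): for `p, q > 0` and `α, β > 0`,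
the function `(t₁, t₂) ↦ α·p·log t₁ − q·t₁ − p·t₂ + β·q·log t₂` over
`t₁, t₂ > 0` is maximized at `t₁ = α·p/q`, `t₂ = β·q/p`, with maximum value
`α·p·log(α·p/q) − α·p − β·q + β·q·log(β·q/p)`. -/
theorem d2gan_optimal_discriminators_pointwise
    (p q α β : ℝ) (hp : 0 < p) (hq : 0 < q) (hα : 0 < α) (hβ : 0 < β) :
    (∀ t₁ t₂ : ℝ, 0 < t₁ → 0 < t₂ →
      α * p * Real.log t₁ - q * t₁ - p * t₂ + β * q * Real.log t₂ ≤
        α * p * Real.log (α * p / q) - q * (α * p / q) - p * (β * q / p)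
          + β * q * Real.log (β * q / p)) ∧
    α * p * Real.log (α * p / q) - q * (α * p / q) - p * (β * q / p)
        + β * q * Real.log (β * q / p)
      = α * p * Real.log (α * p / q) - α * p - β * q + β * q * Real.log (β * q / p) := by
  have e1 : q * (α * p / q) = α * p := by field_simp
  have e2 : p * (β * q / p) = β * q := by field_simp
  constructor
  · intro t₁ t₂ ht₁ ht₂
    have h1 := aux_max (α * p) q t₁ (by positivity) hq ht₁
    have h2 := aux_max (β * q) p t₂ (by positivity) hp ht₂
    rw [e1, e2]
    linarith
  · rw [e1, e2]
end
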